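/- Let G be a group, A an abelian normal subgroup of G, and T = t_1A ∪ ⋯ ∪ t_nA ∪ A a union of cosets where t_1, …, t_n ∈ G commute with each other. Then T satisfies the Malcev law M_c(x,y) (c ≥ 1) if and only if for every t, u ∈ {1, t_1, …, t_n} the endomorphism of A obtained by evaluating f_c(X,Y) at the conjugation automorphisms t, u is the zero endomorphism. -/

import Mathlib

open Pointwise
open scoped IsMulCommutative

/-- Malcev word pair `(α_c, β_c)`. -/
def malcevPair {G : Type*} [Monoid G] (c : ℕ) (x y : G) : G × G :=
  Nat.rec (x, y) (fun _ p => (p.1 * p.2, p.2 * p.1)) c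

/-- The Malcev word `α_c(x,y)`. -/
def malcevAlpha {G : Type*} [Monoid G] (c : ℕ) (x y : G) : G := (malcevPair c x y).1

/-- The Malcev word `β_c(x,y)`. -/
def malcevBeta {G : Type*} [Monoid G] (c : ℕ) (x y : G) : G := (malcevPair c x y).2

/-- The evaluation of `f_c(X,Y) = (X-1)·∏_{i=0}^{c-2}(X^{2^i}Y^{2^i}-1)` at two
elements of a (possibly noncommutative) ring. -/
def fEval {R : Type*} [Ring R] (c : ℕ) (t u : R) : R :=
  (t - 1) * ((List.range (c - 1)).map fun i => t ^ 2 ^ i * u ^ 2 ^ i - 1).prod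

/-- The endomorphism of the abelian normal subgroup `A` (written additively)
induced by conjugation by `t`, i.e. `a ↦ a^t = t⁻¹ * a * t`. -/
def conjEnd {G : Type*} [Group G] (A : Subgroup G) [hN : A.Normal] [IsMulCommutative A]
    (t : G) : AddMonoid.End (Additive A) :=
  AddMonoidHom.mk'
    (fun a => Additive.ofMul (⟨t⁻¹ * ((Additive.toMul a : A) : G) * t, by
      simpa using hN.conj_mem _ (Additive.toMul a).2 t⁻¹⟩ : A))
    (fun a b => congrArg Additive.ofMul (Subtype.ext (by
      show t⁻¹ * ((Additive.toMul a * Additive.toMul b : A) : G) * t = _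
      simp only [toMul_ofMul, Subgroup.coe_mul]
      group)))

/-!
Write `A` additively, so that conjugation by `t` acts on it as the endomorphism `conjEnd A t`.
For commuting `v, w` and `a, b ∈ A`, induction on `k` shows that both `α_{k+1}(va, wb)` and
`β_{k+1}(va, wb)` lie in the coset `(vw)^{2^k} A`, and that the difference of their components
in `A` is `f_{k+1}(w, v) a - f_{k+1}(v, w) b`: passing from `k` to `k + 1` multiplies the
difference by `g - 1`, where `g` is conjugation by `(vw)^{2^k}`, and this is exactly the factor
by which `f_{k+2}` exceeds `f_{k+1}`. Hence `α_c(va, wb) = β_c(va, wb)` iff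
`f_c(w, v) a = f_c(v, w) b`, and taking `a` or `b` trivial gives the theorem.
-/

lemma AddMonoid.End.sub_apply {M : Type*} [AddCommGroup M] (f g : AddMonoid.End M) (x : M) :
    (f - g) x = f x - g x :=
  rfl

section fEval

variable {R : Type*} [Ring R]

lemma fEval_one (t u : R) : fEval 1 t u = t - 1 := by
  simp [fEval]

lemma Commute.fEval_right {x t u : R} (ht : Commute x t) (hu : Commute x u) (c : ℕ) :
    Commute x (fEval c t u) := by
  refine (ht.sub_right (Commute.one_right x)).mul_right (Commute.list_prod_right _ _ ?_)
  simp only [List.mem_map]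
  rintro _ ⟨i, -, rfl⟩
  exact ((ht.pow_right _).mul_right (hu.pow_right _)).sub_right (Commute.one_right x)

lemma fEval_add_two {t u : R} (h : Commute t u) (c : ℕ) :
    fEval (c + 2) t u = (t ^ 2 ^ c * u ^ 2 ^ c - 1) * fEval (c + 1) t u := by
  have hcomm : Commute (t ^ 2 ^ c * u ^ 2 ^ c - 1) (fEval (c + 1) t u) := by
    refine Commute.fEval_right ?_ ?_ _ |>.sub_left (Commute.one_left _)
    · exact ((Commute.refl t).pow_left _).mul_left (h.symm.pow_left _)
    · exact (h.pow_left _).mul_left ((Commute.refl u).pow_left _)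
  rw [hcomm.eq]
  simp only [fEval, show c + 2 - 1 = c + 1 by omega, Nat.add_sub_cancel, List.range_succ,
    List.map_append, List.prod_append, List.map_cons, List.map_nil, List.prod_cons,
    List.prod_nil, mul_one, mul_assoc]

end fEval

section conjEnd

variable {G : Type*} [Group G] (A : Subgroup G)

lemma addMonoidEnd_ext_of_coe {f g : AddMonoid.End (Additive A)}
    (h : ∀ a : Additive A, ((Additive.toMul (f a) : A) : G) = ((Additive.toMul (g a) : A) : G)) :
    f = g :=
  AddMonoid.End.ext _ fun a => Additive.toMul.injective (Subtype.ext (h a))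

variable [A.Normal] [IsMulCommutative A]

lemma coe_toMul_conjEnd (v : G) (a : Additive A) :
    ((Additive.toMul (conjEnd A v a) : A) : G) = v⁻¹ * ((Additive.toMul a : A) : G) * v :=
  rfl

lemma conjEnd_mul (v w : G) : conjEnd A (v * w) = conjEnd A w * conjEnd A v :=
  addMonoidEnd_ext_of_coe A fun a => by
    simp only [AddMonoid.End.coe_mul, Function.comp_apply, coe_toMul_conjEnd]
    group

lemma conjEnd_one : conjEnd A 1 = 1 :=
  addMonoidEnd_ext_of_coe A fun a => by
    simp only [AddMonoid.End.one_apply, coe_toMul_conjEnd]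
    group

lemma conjEnd_pow (v : G) (m : ℕ) : conjEnd A (v ^ m) = conjEnd A v ^ m := by
  induction m with
  | zero => rw [pow_zero, pow_zero, conjEnd_one]
  | succ m ih => rw [pow_succ, conjEnd_mul, ih, ← pow_succ']

lemma Commute.conjEnd {v w : G} (h : Commute v w) : Commute (conjEnd A v) (conjEnd A w) := by
  rw [Commute, SemiconjBy, ← conjEnd_mul, ← conjEnd_mul, h.eq]

lemma mul_coe_mul_mul_coe (g : G) (p q : A) :
    g * p * (g * q) = g ^ 2 * (Additive.toMul (conjEnd A g (Additive.ofMul p)) * q : A) := by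
  rw [Subgroup.coe_mul, coe_toMul_conjEnd, toMul_ofMul]
  group

end conjEnd

section Malcev

section Monoid

variable {M : Type*} [Monoid M]

lemma malcevAlpha_zero (x y : M) : malcevAlpha 0 x y = x :=
  rfl

lemma malcevBeta_zero (x y : M) : malcevBeta 0 x y = y :=
  rfl

lemma malcevAlpha_succ (c : ℕ) (x y : M) :
    malcevAlpha (c + 1) x y = malcevAlpha c x y * malcevBeta c x y :=
  rfl

lemma malcevBeta_succ (c : ℕ) (x y : M) :
    malcevBeta (c + 1) x y = malcevBeta c x y * malcevAlpha c x y :=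
  rfl

end Monoid

variable {G : Type*} [Group G] (A : Subgroup G) [A.Normal] [IsMulCommutative A]

lemma exists_malcev_eq_pow_mul {v w : G} (hvw : Commute v w) (a b : A) (k : ℕ) :
    ∃ p q : A,
      malcevAlpha (k + 1) (v * a) (w * b) = (v * w) ^ 2 ^ k * p ∧
      malcevBeta (k + 1) (v * a) (w * b) = (v * w) ^ 2 ^ k * q ∧
      Additive.ofMul p - Additive.ofMul q =
        fEval (k + 1) (conjEnd A w) (conjEnd A v) (Additive.ofMul a)
          - fEval (k + 1) (conjEnd A v) (conjEnd A w) (Additive.ofMul b) := by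
  induction k with
  | zero =>
    refine ⟨Additive.toMul (conjEnd A w (Additive.ofMul a)) * b,
      Additive.toMul (conjEnd A v (Additive.ofMul b)) * a, ?_, ?_, ?_⟩
    · rw [malcevAlpha_succ, Subgroup.coe_mul, coe_toMul_conjEnd]
      simp only [malcevAlpha_zero, malcevBeta_zero, toMul_ofMul]
      group
    · rw [malcevBeta_succ, Subgroup.coe_mul, coe_toMul_conjEnd, hvw.eq]
      simp only [malcevAlpha_zero, malcevBeta_zero, toMul_ofMul]
      group
    · simp only [zero_add, fEval_one, ofMul_mul, ofMul_toMul, AddMonoid.End.sub_apply,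
        AddMonoid.End.one_apply]
      abel
  | succ k ih =>
    obtain ⟨p, q, hα, hβ, hdiff⟩ := ih
    set g := (v * w) ^ 2 ^ k
    have hg : (v * w) ^ 2 ^ (k + 1) = g ^ 2 := by rw [pow_succ, pow_mul]
    refine ⟨Additive.toMul (conjEnd A g (Additive.ofMul p)) * q,
      Additive.toMul (conjEnd A g (Additive.ofMul q)) * p, ?_, ?_, ?_⟩
    · rw [malcevAlpha_succ, hα, hβ, hg, mul_coe_mul_mul_coe]
    · rw [malcevBeta_succ, hα, hβ, hg, mul_coe_mul_mul_coe]
    · have hV := hvw.conjEnd A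
      have hconj : conjEnd A g = conjEnd A w ^ 2 ^ k * conjEnd A v ^ 2 ^ k := by
        rw [conjEnd_pow, conjEnd_mul, hV.symm.mul_pow]
      have hstep : Additive.ofMul (Additive.toMul (conjEnd A g (Additive.ofMul p)) * q)
          - Additive.ofMul (Additive.toMul (conjEnd A g (Additive.ofMul q)) * p)
          = (conjEnd A g - 1) (Additive.ofMul p - Additive.ofMul q) := by
        simp only [ofMul_mul, ofMul_toMul, AddMonoid.End.sub_apply, AddMonoid.End.one_apply,
          map_sub]
        abel
      rw [hstep, hdiff, fEval_add_two hV.symm, fEval_add_two hV, (hV.pow_pow _ _).eq, ← hconj]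
      simp only [AddMonoid.End.coe_mul, Function.comp_apply, map_sub]

lemma malcevAlpha_mul_eq_malcevBeta_mul_iff {v w : G} (hvw : Commute v w) (a b : A) {c : ℕ}
    (hc : 1 ≤ c) :
    malcevAlpha c (v * a) (w * b) = malcevBeta c (v * a) (w * b) ↔
      fEval c (conjEnd A w) (conjEnd A v) (Additive.ofMul a)
        = fEval c (conjEnd A v) (conjEnd A w) (Additive.ofMul b) := by
  obtain ⟨k, rfl⟩ := Nat.exists_eq_add_of_le' hc
  obtain ⟨p, q, hα, hβ, hdiff⟩ := exists_malcev_eq_pow_mul A hvw a b k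
  rw [hα, hβ, mul_right_inj, SetLike.coe_eq_coe, ← Additive.ofMul.injective.eq_iff,
    ← sub_eq_zero, hdiff, sub_eq_zero]

end Malcev

lemma mem_iUnion_smul_union_iff {G : Type*} [Group G] (A : Subgroup G) {ι : Type*}
    (t : ι → G) (x : G) :
    x ∈ (⋃ i, t i • (A : Set G)) ∪ (A : Set G) ↔
      ∃ v ∈ insert (1 : G) (Set.range t), ∃ a : A, x = v * a := by
  constructor
  · rintro (hx | hx)
    · obtain ⟨i, a, ha, rfl⟩ := Set.mem_iUnion.1 hx
      exact ⟨t i, Or.inr ⟨i, rfl⟩, ⟨a, ha⟩, rfl⟩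
    · exact ⟨1, Or.inl rfl, ⟨x, hx⟩, (one_mul x).symm⟩
  · rintro ⟨v, rfl | ⟨i, rfl⟩, a, rfl⟩
    · simp
    · exact Or.inl (Set.mem_iUnion.2 ⟨i, Set.smul_mem_smul_set a.2⟩)

theorem malcev_law_on_union_of_cosets_iff_fEval_eq_zero
    {G : Type*} [Group G] (A : Subgroup G) [A.Normal] [IsMulCommutative A]
    (c n : ℕ) (hc : 1 ≤ c) (t : Fin n → G)
    (hcomm : ∀ i j, Commute (t i) (t j)) :
    (∀ x ∈ (⋃ i, t i • (A : Set G)) ∪ (A : Set G),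
      ∀ y ∈ (⋃ i, t i • (A : Set G)) ∪ (A : Set G),
        malcevAlpha c x y = malcevBeta c x y) ↔
      ∀ v ∈ insert (1 : G) (Set.range t), ∀ w ∈ insert (1 : G) (Set.range t),
        fEval c (conjEnd A v) (conjEnd A w) = 0 := by
  have hS : ∀ v ∈ insert (1 : G) (Set.range t), ∀ w ∈ insert (1 : G) (Set.range t),
      Commute v w := by
    rintro _ (rfl | ⟨i, rfl⟩) _ (rfl | ⟨j, rfl⟩)
    exacts [Commute.one_left 1, Commute.one_left _, Commute.one_right _, hcomm i j]
  simp only [mem_iUnion_smul_union_iff]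
  constructor
  · intro H v hv w hw
    refine AddMonoid.End.ext _ fun z => ?_
    have := (malcevAlpha_mul_eq_malcevBeta_mul_iff A (hS w hw v hv) (Additive.toMul z) 1 hc).1
      (H _ ⟨w, hw, _, rfl⟩ _ ⟨v, hv, 1, rfl⟩)
    simpa using this
  · rintro H _ ⟨v, hv, a, rfl⟩ _ ⟨w, hw, b, rfl⟩
    rw [malcevAlpha_mul_eq_malcevBeta_mul_iff A (hS v hv w hw) a b hc, H w hw v hv, H v hv w hw]
    rfl
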